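/- arXiv:2603.05777 — 3 statements merged into one kernel-verified Lean document; each statement's English description precedes it below -/
import Mathlib

section
/- Direct monitoring dominates indirect monitoring: for all real numbers w_i, w_k with 0 ≤ w_i < 1 and 0 ≤ w_k < 1, F_D(w_i) ≥ F_I(w_i, w_k), where F_D(w) = 12w²/((1+3w²)(1−w²)) and F_I(w_i,w_k) = 12 w_i² w_k⁴ / ((1+3 w_i² w_k²)(1−w_i² w_k²)). -/
noncomputable def F_D (w : ℝ) : ℝ := 12 * w^2 / ((1 + 3 * w^2) * (1 - w^2))
noncomputable def F_I (a b : ℝ) : ℝ := 12 * a^2 * b^4 / ((1 + 3 * a^2 * b^2) * (1 - a^2 * b^2))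

theorem direct_dominates_indirect (wi wk : ℝ) (hi0 : 0 ≤ wi) (hi1 : wi < 1)
    (hk0 : 0 ≤ wk) (hk1 : wk < 1) : F_D wi ≥ F_I wi wk := by
  have hi2 : wi^2 < 1 := by nlinarith
  have hk2 : wk^2 ≤ 1 := by nlinarith
  have hik : wi^2 * wk^2 < 1 := by nlinarith [sq_nonneg wi, sq_nonneg wk]
  have h1 : (0:ℝ) < (1 + 3 * wi^2) * (1 - wi^2) := by
    apply mul_pos <;> nlinarith [sq_nonneg wi]
  have h2 : (0:ℝ) < (1 + 3 * wi^2 * wk^2) * (1 - wi^2 * wk^2) := by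
    apply mul_pos <;> nlinarith [sq_nonneg (wi*wk)]
  rw [ge_iff_le, F_D, F_I, div_le_div_iff₀ h2 h1]
  nlinarith [sq_nonneg wi, sq_nonneg wk, sq_nonneg (wi*wk), mul_nonneg (sq_nonneg wi) (sq_nonneg wk),
    mul_nonneg (mul_nonneg (sq_nonneg wi) (sq_nonneg wk)) (sq_nonneg (wi*wk)),
    sq_nonneg (1 - wk^2), mul_nonneg (sq_nonneg wi) (sq_nonneg (1 - wk^2)),
    mul_nonneg (mul_nonneg (sq_nonneg wi) (sq_nonneg wi)) (sq_nonneg (1 - wk^2)),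
    mul_nonneg (mul_nonneg (sq_nonneg (wi*wk)) (sq_nonneg wi)) (sq_nonneg (1 - wk^2))]
end

section
/- Exchange inequality for a pair of links: if 0 ≤ w_j ≤ w_i < 1, then F_D(w_i) + F_I(w_i, w_j) ≥ F_D(w_j) + F_I(w_j, w_i), where F_D(w) = 12w²/((1+3w²)(1−w²)) and F_I(a,b) = 12 a² b⁴/((1+3a²b²)(1−a²b²)). -/
/-!
Put `x = w_i²`, `y = w_j²` and `q t = (1 + 3t)(1 - t)`, so that `F_D w = 12 w² / q (w²)`. Both
differences share the factor `x - y`: `F_D w_i - F_D w_j = 12 (x - y)(1 + 3xy) / (q x q y)`, because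
`x q y - y q x = (x - y)(1 + 3xy)`, while the two indirect terms differ by `12 (x - y) xy / q (xy)`.
The theorem thus reduces to the polynomial inequality `xy q x q y ≤ (1 + 3xy) q (xy)` on the unit
square, whose defect is an explicit sum of nonnegative terms.
-/

def qfiDenom (x : ℝ) : ℝ := (1 + 3 * x) * (1 - x)

lemma qfiDenom_pos {x : ℝ} (hx₀ : -1 < 3 * x) (hx₁ : x < 1) : 0 < qfiDenom x :=
  mul_pos (by linarith) (by linarith)

lemma F_D_eq (w : ℝ) : F_D w = 12 * w ^ 2 / qfiDenom (w ^ 2) := rfl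

lemma F_I_eq (a b : ℝ) : F_I a b = 12 * b ^ 2 * (a ^ 2 * b ^ 2) / qfiDenom (a ^ 2 * b ^ 2) := by
  rw [F_I, qfiDenom]
  ring

lemma F_D_sub_F_D {v w : ℝ} (hv : v ^ 2 ≠ 1) (hw : w ^ 2 ≠ 1) :
    F_D v - F_D w =
      12 * (v ^ 2 - w ^ 2) * ((1 + 3 * (v ^ 2 * w ^ 2)) / (qfiDenom (v ^ 2) * qfiDenom (w ^ 2))) := by
  have hq {u : ℝ} (hu : u ^ 2 ≠ 1) : qfiDenom (u ^ 2) ≠ 0 :=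
    mul_ne_zero (by positivity) (sub_ne_zero.2 hu.symm)
  rw [F_D_eq, F_D_eq, div_sub_div _ _ (hq hv) (hq hw), mul_div_assoc']
  congr 1
  rw [qfiDenom, qfiDenom]
  ring

lemma F_I_sub_F_I (a b : ℝ) :
    F_I b a - F_I a b = 12 * (a ^ 2 - b ^ 2) * (a ^ 2 * b ^ 2 / qfiDenom (a ^ 2 * b ^ 2)) := by
  rw [F_I_eq, F_I_eq, mul_comm (b ^ 2) (a ^ 2), ← sub_div, mul_div_assoc']
  ring

lemma mul_mul_qfiDenom_le {x y : ℝ} (hx₀ : 0 ≤ x) (hx₁ : x ≤ 1) (hy₀ : 0 ≤ y) (hy₁ : y ≤ 1) :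
    x * y * (qfiDenom x * qfiDenom y) ≤ (1 + 3 * (x * y)) * qfiDenom (x * y) := by
  have defect : (1 + 3 * (x * y)) * qfiDenom (x * y) - x * y * (qfiDenom x * qfiDenom y) =
      3 * (x * y) * (x - y) ^ 2 + 6 * (x * y) ^ 2 * (x * (1 - y) + y * (1 - x)) +
        (1 - x * y) * (1 + 3 * (x * y) + 6 * (x * y) ^ 2) + 2 * (x * y) * ((1 - x) * (1 - y)) := by
    rw [qfiDenom, qfiDenom, qfiDenom]
    ring
  have hxy₀ : 0 ≤ x * y := mul_nonneg hx₀ hy₀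
  have hx₁' : 0 ≤ 1 - x := sub_nonneg.2 hx₁
  have hy₁' : 0 ≤ 1 - y := sub_nonneg.2 hy₁
  have hxy₁ : 0 ≤ 1 - x * y := sub_nonneg.2 (mul_le_one₀ hx₁ hy₀ hy₁)
  have : 0 ≤ 3 * (x * y) * (x - y) ^ 2 + 6 * (x * y) ^ 2 * (x * (1 - y) + y * (1 - x)) +
        (1 - x * y) * (1 + 3 * (x * y) + 6 * (x * y) ^ 2) + 2 * (x * y) * ((1 - x) * (1 - y)) := by
    positivity
  linarith

lemma div_qfiDenom_mul_le {x y : ℝ} (hx₀ : 0 ≤ x) (hx₁ : x < 1) (hy₀ : 0 ≤ y) (hy₁ : y < 1) :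
    x * y / qfiDenom (x * y) ≤ (1 + 3 * (x * y)) / (qfiDenom x * qfiDenom y) := by
  have hxy₀ : 0 ≤ x * y := mul_nonneg hx₀ hy₀
  have hxy₁ : x * y < 1 := mul_lt_one_of_nonneg_of_lt_one_left hx₀ hx₁ hy₁.le
  rw [div_le_div_iff₀ (qfiDenom_pos (by linarith) hxy₁)
    (mul_pos (qfiDenom_pos (by linarith) hx₁) (qfiDenom_pos (by linarith) hy₁))]
  exact mul_mul_qfiDenom_le hx₀ hx₁.le hy₀ hy₁.le

theorem pair_exchange (wi wj : ℝ) (hj0 : 0 ≤ wj) (hji : wj ≤ wi) (hi1 : wi < 1) :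
    F_D wi + F_I wi wj ≥ F_D wj + F_I wj wi := by
  have hx₁ : wi ^ 2 < 1 := pow_lt_one₀ (hj0.trans hji) hi1 two_ne_zero
  have hyx : wj ^ 2 ≤ wi ^ 2 := pow_le_pow_left₀ hj0 hji 2
  have key := div_qfiDenom_mul_le (sq_nonneg wi) hx₁ (sq_nonneg wj) (hyx.trans_lt hx₁)
  have : F_I wj wi - F_I wi wj ≤ F_D wi - F_D wj := by
    rw [F_I_sub_F_I, F_D_sub_F_D hx₁.ne (hyx.trans_lt hx₁).ne]
    gcongr
  linarith
end

section
/- Single-monitor optimality in a star network: let w : Fin n → ℝ with 0 ≤ w(k) < 1 for all k and w sorted nonincreasing (w(0) ≥ w(1) ≥ … ≥ w(n−1)). Then for every index j, F_D(w(0)) + Σ_{k≠0} F_I(w(0), w(k)) ≥ F_D(w(j)) + Σ_{k≠j} F_I(w(j), w(k)), where F_D(v) = 12v²/((1+3v²)(1−v²)) and F_I(a,b) = 12a²b⁴/((1+3a²b²)(1−a²b²)). -/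
/-!
Since `F_I a b = b² F_D (a b)` and `F_D` is increasing in `w²`, moving the monitor from a link
with parameter `b` to one with parameter `a ≥ b` increases every indirect term towards a third
link. The two links exchanged contribute `F_D b + a² F_D (a b)` before and `F_D a + b² F_D (a b)`
after, and `(a² - b²) F_D (a b) ≤ F_D a - F_D b` is a polynomial inequality in `a²`, `b²` once
the denominators are cleared.
-/

open Finset

lemma F_I_eq_mul_F_D (a b : ℝ) : F_I a b = b ^ 2 * F_D (a * b) := by
  rw [F_I, F_D, mul_div_assoc']
  congr 1 <;> ring

lemma F_D_denom_pos {a : ℝ} (ha : a ^ 2 < 1) : 0 < (1 + 3 * a ^ 2) * (1 - a ^ 2) := by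
  have := sq_nonneg a
  apply mul_pos <;> linarith

lemma F_D_sub_F_D_s5 {a b : ℝ} (ha : a ^ 2 < 1) (hb : b ^ 2 < 1) :
    F_D a - F_D b = 12 * (a ^ 2 - b ^ 2) * (1 + 3 * a ^ 2 * b ^ 2) /
      ((1 + 3 * a ^ 2) * (1 - a ^ 2) * ((1 + 3 * b ^ 2) * (1 - b ^ 2))) := by
  rw [F_D, F_D, div_sub_div _ _ (F_D_denom_pos ha).ne' (F_D_denom_pos hb).ne']
  congr 1
  ring

lemma F_D_le_F_D_of_sq_le {a b : ℝ} (hba : b ^ 2 ≤ a ^ 2) (ha : a ^ 2 < 1) : F_D b ≤ F_D a := by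
  have hb : b ^ 2 < 1 := hba.trans_lt ha
  rw [← sub_nonneg, F_D_sub_F_D_s5 ha hb]
  have := F_D_denom_pos ha
  have := F_D_denom_pos hb
  have := sub_nonneg.2 hba
  positivity

lemma F_I_le_F_I_of_sq_le {a b c : ℝ} (hba : b ^ 2 ≤ a ^ 2) (ha : a ^ 2 < 1) (hc : c ^ 2 ≤ 1) :
    F_I b c ≤ F_I a c := by
  have hc0 := sq_nonneg c
  rw [F_I_eq_mul_F_D, F_I_eq_mul_F_D]
  refine mul_le_mul_of_nonneg_left (F_D_le_F_D_of_sq_le ?_ ?_) hc0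
  · rw [mul_pow, mul_pow]
    exact mul_le_mul_of_nonneg_right hba hc0
  · rw [mul_pow]
    nlinarith [sq_nonneg a]

lemma sq_sub_sq_mul_F_D_mul_le {a b : ℝ} (hba : b ^ 2 ≤ a ^ 2) (ha : a ^ 2 < 1) :
    (a ^ 2 - b ^ 2) * F_D (a * b) ≤ F_D a - F_D b := by
  have hb : b ^ 2 < 1 := hba.trans_lt ha
  have hab : (a * b) ^ 2 < 1 := by rw [mul_pow]; nlinarith [sq_nonneg a, sq_nonneg b]
  rw [F_D_sub_F_D_s5 ha hb, F_D, mul_div_assoc', div_le_div_iff₀ (F_D_denom_pos hab)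
    (mul_pos (F_D_denom_pos ha) (F_D_denom_pos hb))]
  set x := a ^ 2
  set y := b ^ 2
  have hx : 0 ≤ x := sq_nonneg a
  have hy : 0 ≤ y := sq_nonneg b
  rw [mul_pow]
  have h_one_sub : (1 - x) * (1 - y) ≤ 1 - x * y := by nlinarith
  have h_one_add : x * y * ((1 + 3 * x) * (1 + 3 * y)) ≤ (1 + 3 * (x * y)) ^ 2 := by
    nlinarith [mul_nonneg (mul_nonneg hx hy) (mul_nonneg (sub_nonneg.2 ha.le) (sub_nonneg.2 hb.le))]
  have key : x * y * ((1 + 3 * x) * (1 - x) * ((1 + 3 * y) * (1 - y))) ≤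
      (1 + 3 * (x * y)) ^ 2 * (1 - x * y) := by
    calc x * y * ((1 + 3 * x) * (1 - x) * ((1 + 3 * y) * (1 - y)))
        = x * y * ((1 + 3 * x) * (1 + 3 * y)) * ((1 - x) * (1 - y)) := by ring
      _ ≤ (1 + 3 * (x * y)) ^ 2 * (1 - x * y) :=
        mul_le_mul h_one_add h_one_sub (by nlinarith) (by positivity)
  nlinarith [mul_le_mul_of_nonneg_left key (by linarith : (0:ℝ) ≤ 12 * (x - y))]

lemma F_D_add_F_I_le {a b : ℝ} (hba : b ^ 2 ≤ a ^ 2) (ha : a ^ 2 < 1) :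
    F_D b + F_I b a ≤ F_D a + F_I a b := by
  have := sq_sub_sq_mul_F_D_mul_le hba ha
  rw [F_I_eq_mul_F_D, F_I_eq_mul_F_D, mul_comm b a]
  linarith

noncomputable def totalQFI {ι : Type*} [Fintype ι] [DecidableEq ι] (w : ι → ℝ) (j : ι) : ℝ :=
  F_D (w j) + ∑ k ∈ univ.erase j, F_I (w j) (w k)

lemma totalQFI_le_of_sq_le {ι : Type*} [Fintype ι] [DecidableEq ι] {w : ι → ℝ}
    (hw : ∀ k, w k ^ 2 < 1) {i j : ι} (hij : w j ^ 2 ≤ w i ^ 2) : totalQFI w j ≤ totalQFI w i := by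
  rcases eq_or_ne i j with rfl | hne
  · exact le_rfl
  rw [totalQFI, totalQFI, ← add_sum_erase _ _ (mem_erase.2 ⟨hne, mem_univ i⟩),
    ← add_sum_erase _ _ (mem_erase.2 ⟨hne.symm, mem_univ j⟩), erase_right_comm]
  have h_swap := F_D_add_F_I_le hij (hw i)
  have h_rest : ∑ k ∈ (univ.erase i).erase j, F_I (w j) (w k) ≤
      ∑ k ∈ (univ.erase i).erase j, F_I (w i) (w k) :=
    sum_le_sum fun k _ => F_I_le_F_I_of_sq_le hij (hw i) (hw k).le
  linarith

theorem single_monitor_optimal (n : ℕ) (w : Fin (n + 1) → ℝ)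
    (h0 : ∀ k, 0 ≤ w k) (h1 : ∀ k, w k < 1) (hmono : Antitone w) (j : Fin (n + 1)) :
    F_D (w 0) + ∑ k ∈ Finset.univ.erase 0, F_I (w 0) (w k) ≥
      F_D (w j) + ∑ k ∈ Finset.univ.erase j, F_I (w j) (w k) :=
  totalQFI_le_of_sq_le (fun k => pow_lt_one₀ (h0 k) (h1 k) two_ne_zero)
    (pow_le_pow_left₀ (h0 j) (hmono (Fin.zero_le j)) 2)
end
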